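/- Let ⟨G,m⟩ be a d-periodic orbit graph with |E| = d|V| - d, and suppose that for some configuration p the framework (⟨G,m⟩, p) is infinitesimally rigid on the fixed torus. Then every subgraph G' ⊆ G with nonempty edge set E' and vertex set V' (the vertices incident to E') satisfying |E'| = d|V'| - d has gain space of rank at least d - 1: the ℤ-submodule of ℤ^d generated by the net gains of the closed walks of G' has rank ≥ d - 1. -/

import Mathlib

open Matrix

/-- The row vector `z L ∈ ℝ^d` obtained from an integer vector `z ∈ ℤ^d` and the
lattice matrix `L`. -/
noncomputable def gainVec {d : ℕ} (L : Matrix (Fin d) (Fin d) ℝ) (z : Fin d → ℤ) :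
    Fin d → ℝ :=
  Matrix.vecMul (fun k => (z k : ℝ)) L

/-- An infinitesimal motion of the periodic orbit framework `(⟨G,m⟩,p)` on the fixed
torus with lattice matrix `L`:
`(u_{i(e)} - u_{j(e)}) · (p_{i(e)} - p_{j(e)} - m_e L) = 0` for every edge `e`. -/
def IsMotion (d : ℕ) {V E : Type*} (ie je : E → V) (m : E → Fin d → ℤ)
    (p : V → Fin d → ℝ) (L : Matrix (Fin d) (Fin d) ℝ) (u : V → Fin d → ℝ) : Prop :=
  ∀ e : E, (fun k => u (ie e) k - u (je e) k) ⬝ᵥ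
      (fun k => p (ie e) k - p (je e) k - gainVec L (m e) k) = 0

/-- `IsWalk ie je a w b` : the list `w` of edges, each traversed forwards (`true`) or
backwards (`false`), forms a walk in the multigraph from vertex `a` to vertex `b`. -/
def IsWalk {V E : Type*} (ie je : E → V) : V → List (E × Bool) → V → Prop
  | a, [], b => a = b
  | a, ed :: rest, b =>
      a = (if ed.2 then ie ed.1 else je ed.1) ∧
        IsWalk ie je (if ed.2 then je ed.1 else ie ed.1) rest b

/-- The net gain of a walk: `+m_e` for forwards-traversed edges and `-m_e` for
backwards-traversed edges. -/
def netGain {d : ℕ} {E : Type*} (m : E → Fin d → ℤ) (w : List (E × Bool)) : Fin d → ℤ :=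
  (w.map fun ed => if ed.2 then m ed.1 else -m ed.1).sum

/-- The gain space of the subgraph spanned by a set `Y` of edges: the `ℤ`-submodule of
`ℤ^d` generated by the net gains of the closed walks using only edges of `Y`. -/
def gainSpaceOf (d : ℕ) {V E : Type*} (ie je : E → V) (m : E → Fin d → ℤ)
    (Y : Set E) : Submodule ℤ (Fin d → ℤ) :=
  Submodule.span ℤ
    {g | ∃ (v : V) (w : List (E × Bool)),
      IsWalk ie je v w v ∧ (∀ ed ∈ w, ed.1 ∈ Y) ∧ netGain m w = g}

/-! If the gain space of `E'` had rank at most `d - 2`, two independent directions `a`, `b`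
would be orthogonal to every `g L` with `g` in it. Shifting the vertices by a potential makes
each edge vector of `E'` a difference of positions minus such a `g L`, so the infinitesimal
rotation in the plane of `a` and `b` (or, if that is constant, moving a single vertex in
direction `a`) is a nonconstant motion of the subframework on `E'`. Its space of motions then
has dimension at least `d + 1`, so its rigidity matrix has rank below `d|V'| - d = |E'|`.
But rigidity together with `|E| = d|V| - d` makes the rows of the whole rigidity matrix
independent, so the `|E'|` rows of the subframework have full rank. -/

open Module

section Walks

variable {V E : Type*} (ie je : E → V)

def IsWalkIn (Y : Set E) (a : V) (w : List (E × Bool)) (b : V) : Prop :=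
  IsWalk ie je a w b ∧ ∀ ed ∈ w, ed.1 ∈ Y

def reverseWalk (w : List (E × Bool)) : List (E × Bool) :=
  w.reverse.map fun ed => (ed.1, !ed.2)

variable {ie je} {Y : Set E}

theorem IsWalk.append {a b c : V} {w₁ w₂ : List (E × Bool)}
    (h₁ : IsWalk ie je a w₁ b) (h₂ : IsWalk ie je b w₂ c) : IsWalk ie je a (w₁ ++ w₂) c := by
  induction w₁ generalizing a with
  | nil => cases h₁; exact h₂
  | cons ed rest ih => exact ⟨h₁.1, ih h₁.2⟩

theorem IsWalk.reverse {a b : V} {w : List (E × Bool)} (h : IsWalk ie je a w b) :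
    IsWalk ie je b (reverseWalk w) a := by
  induction w generalizing a with
  | nil => exact h.symm
  | cons ed rest ih =>
    obtain ⟨e, _ | _⟩ := ed <;>
    · simp only [reverseWalk, List.reverse_cons, List.map_append] at ih ⊢
      exact (ih h.2).append ⟨rfl, h.1.symm⟩

theorem IsWalkIn.append {a b c : V} {w₁ w₂ : List (E × Bool)}
    (h₁ : IsWalkIn ie je Y a w₁ b) (h₂ : IsWalkIn ie je Y b w₂ c) :
    IsWalkIn ie je Y a (w₁ ++ w₂) c :=
  ⟨h₁.1.append h₂.1, fun ed hed => (List.mem_append.1 hed).elim (h₁.2 ed) (h₂.2 ed)⟩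

theorem IsWalkIn.reverse {a b : V} {w : List (E × Bool)} (h : IsWalkIn ie je Y a w b) :
    IsWalkIn ie je Y b (reverseWalk w) a :=
  ⟨h.1.reverse, fun _ hed => by
    obtain ⟨ed, hmem, rfl⟩ := List.mem_map.1 hed
    exact h.2 ed (List.mem_reverse.1 hmem)⟩

theorem isWalkIn_edge {e : E} (he : e ∈ Y) : IsWalkIn ie je Y (ie e) [(e, true)] (je e) :=
  ⟨⟨rfl, rfl⟩, by simpa using he⟩

theorem netGain_append {d : ℕ} (m : E → Fin d → ℤ) (w₁ w₂ : List (E × Bool)) :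
    netGain m (w₁ ++ w₂) = netGain m w₁ + netGain m w₂ := by
  simp [netGain]

theorem netGain_reverseWalk {d : ℕ} (m : E → Fin d → ℤ) (w : List (E × Bool)) :
    netGain m (reverseWalk w) = -netGain m w := by
  induction w with
  | nil => simp [netGain, reverseWalk]
  | cons ed rest ih =>
    obtain ⟨e, _ | _⟩ := ed <;>
    · simp only [reverseWalk, List.reverse_cons, List.map_append] at ih ⊢
      rw [netGain_append, ih]
      simp [netGain, add_comm]

theorem netGain_mem_gainSpaceOf {d : ℕ} (m : E → Fin d → ℤ) {v : V} {w : List (E × Bool)}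
    (h : IsWalkIn ie je Y v w v) : netGain m w ∈ gainSpaceOf d ie je m Y :=
  Submodule.subset_span ⟨v, w, h.1, h.2, rfl⟩

variable (ie je Y)

def walkSetoid : Setoid V where
  r a b := ∃ w, IsWalkIn ie je Y a w b
  iseqv :=
    { refl _ := ⟨[], rfl, by simp⟩
      symm := fun ⟨w, h⟩ => ⟨_, h.reverse⟩
      trans := fun ⟨_, h₁⟩ ⟨_, h₂⟩ => ⟨_, h₁.append h₂⟩ }

/-- `γ v` is the net gain of a walk in `Y` to `v` from a base vertex of its component. -/
theorem exists_potential {d : ℕ} (m : E → Fin d → ℤ) :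
    ∃ γ : V → Fin d → ℤ, ∀ e ∈ Y, γ (ie e) + m e - γ (je e) ∈ gainSpaceOf d ie je m Y := by
  let base (v : V) : V := (Quotient.mk (walkSetoid ie je Y) v).out
  have hwalk (v : V) : ∃ w, IsWalkIn ie je Y (base v) w v :=
    Quotient.exact (Quotient.out_eq (Quotient.mk (walkSetoid ie je Y) v))
  choose walk hwalk using hwalk
  refine ⟨fun v => netGain m (walk v), fun e he => ?_⟩
  have hbase : base (ie e) = base (je e) :=
    congrArg Quotient.out (Quotient.sound ⟨_, isWalkIn_edge he⟩)
  have hclosed := (hwalk (ie e)).append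
    ((isWalkIn_edge he).append (hbase ▸ (hwalk (je e)).reverse))
  have hgain := netGain_mem_gainSpaceOf m hclosed
  rw [netGain_append, netGain_append, netGain_reverseWalk] at hgain
  simpa [netGain, sub_eq_add_neg, add_assoc] using hgain

end Walks

section Rigidity

variable {V E ι : Type*}

variable (V ι) in
def constMap : (ι → ℝ) →ₗ[ℝ] V → ι → ℝ := LinearMap.pi fun _ => LinearMap.id

theorem constMap_apply (c : ι → ℝ) (v : V) : constMap V ι c v = c := rfl

theorem finrank_range_constMap [Nonempty V] [Fintype ι] :
    finrank ℝ (LinearMap.range (constMap V ι)) = Fintype.card ι := by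
  obtain ⟨v⟩ := ‹Nonempty V›
  rw [LinearMap.finrank_range_of_inj fun c c' h => congrFun h v, finrank_fintype_fun_eq_card]

theorem finrank_pi_pi_eq_card_mul [Fintype V] [Fintype ι] :
    finrank ℝ (V → ι → ℝ) = Fintype.card ι * Fintype.card V := by
  simp [Module.finrank_pi_fintype, mul_comm]

variable [Fintype ι] (ie je : E → V) (q : E → ι → ℝ)

def rigidityMap : (V → ι → ℝ) →ₗ[ℝ] E → ℝ where
  toFun u e := (u (ie e) - u (je e)) ⬝ᵥ q e
  map_add' u v := by ext e; simp only [Pi.add_apply, add_sub_add_comm, add_dotProduct]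
  map_smul' c u := by ext e; simp only [Pi.smul_apply, ← smul_sub, smul_dotProduct]; rfl

theorem rigidityMap_apply (u : V → ι → ℝ) (e : E) :
    rigidityMap ie je q u e = (u (ie e) - u (je e)) ⬝ᵥ q e := rfl

theorem range_constMap_le_ker_rigidityMap :
    LinearMap.range (constMap V ι) ≤ LinearMap.ker (rigidityMap ie je q) := by
  rintro _ ⟨c, rfl⟩
  ext e
  simp [rigidityMap_apply, constMap_apply]

variable [Fintype V]

theorem card_lt_finrank_ker_rigidityMap {u : V → ι → ℝ}
    (hu : u ∈ LinearMap.ker (rigidityMap ie je q)) {v₁ v₂ : V} (hne : u v₁ ≠ u v₂) :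
    Fintype.card ι < finrank ℝ (LinearMap.ker (rigidityMap ie je q)) := by
  have : Nonempty V := ⟨v₁⟩
  rw [← finrank_range_constMap (V := V)]
  refine Submodule.finrank_lt_finrank_of_lt <|
    SetLike.lt_iff_le_and_exists.2 ⟨range_constMap_le_ker_rigidityMap ie je q, u, hu, ?_⟩
  rintro ⟨c, rfl⟩
  exact hne rfl

variable [Fintype E]

theorem rigidityMap_surjective
    (hrigid : ∀ u ∈ LinearMap.ker (rigidityMap ie je q), ∀ v w, u v = u w)
    (hcount : Fintype.card E = Fintype.card ι * Fintype.card V - Fintype.card ι) :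
    Function.Surjective (rigidityMap ie je q) := by
  have hker_le : LinearMap.ker (rigidityMap ie je q) ≤ LinearMap.range (constMap V ι) := by
    intro u hu
    rcases isEmpty_or_nonempty V with hV | ⟨⟨v⟩⟩
    · exact ⟨0, funext fun w => isEmptyElim w⟩
    · exact ⟨u v, funext (hrigid u hu v)⟩
  have hker : finrank ℝ (LinearMap.ker (rigidityMap ie je q)) ≤ Fintype.card ι :=
    (Submodule.finrank_mono hker_le).trans
      ((LinearMap.finrank_range_le _).trans_eq (finrank_fintype_fun_eq_card ℝ))
  have hrange : finrank ℝ (LinearMap.range (rigidityMap ie je q)) ≤ Fintype.card E :=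
    (Submodule.finrank_le _).trans_eq (finrank_fintype_fun_eq_card ℝ)
  have hsum := LinearMap.finrank_range_add_finrank_ker (rigidityMap ie je q)
  rw [finrank_pi_pi_eq_card_mul] at hsum
  rw [← LinearMap.range_eq_top]
  apply Submodule.eq_top_of_finrank_eq
  rw [finrank_fintype_fun_eq_card]
  omega

theorem card_add_finrank_ker_rigidityMap (hsurj : Function.Surjective (rigidityMap ie je q)) :
    Fintype.card E + finrank ℝ (LinearMap.ker (rigidityMap ie je q)) =
      Fintype.card ι * Fintype.card V := by
  rw [← finrank_pi_pi_eq_card_mul, ← (rigidityMap ie je q).finrank_range_add_finrank_ker,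
    LinearMap.range_eq_top.2 hsurj, finrank_top, finrank_fintype_fun_eq_card]

end Rigidity

section Rotation

variable {V E ι : Type*} [Fintype ι] (ie je : E → V) (q : E → ι → ℝ)

theorem exists_nonconstant_mem_ker_rigidityMap (p : V → ι → ℝ) {a b : ι → ℝ}
    (hab : LinearIndependent ℝ ![a, b])
    (horth : ∀ e, (p (ie e) - p (je e) - q e) ⬝ᵥ a = 0 ∧ (p (ie e) - p (je e) - q e) ⬝ᵥ b = 0)
    {v₁ v₂ : V} (hv : v₁ ≠ v₂) :
    ∃ u ∈ LinearMap.ker (rigidityMap ie je q), ∃ w₁ w₂, u w₁ ≠ u w₂ := by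
  classical
  have hqa e : q e ⬝ᵥ a = (p (ie e) - p (je e)) ⬝ᵥ a := by
    have := (horth e).1; rw [sub_dotProduct] at this; linarith
  have hqb e : q e ⬝ᵥ b = (p (ie e) - p (je e)) ⬝ᵥ b := by
    have := (horth e).2; rw [sub_dotProduct] at this; linarith
  by_cases hflat : ∀ e, (p (ie e) - p (je e)) ⬝ᵥ a = 0
  · refine ⟨fun v => if v = v₁ then a else 0, ?_, v₁, v₂, by simpa [hv.symm] using hab.ne_zero 0⟩
    ext e
    have hq : a ⬝ᵥ q e = 0 := by rw [dotProduct_comm, hqa, hflat]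
    rw [rigidityMap_apply]
    split_ifs <;> simp [hq]
  · obtain ⟨e, he⟩ := not_forall.1 hflat
    let u v := (p v ⬝ᵥ a) • b - (p v ⬝ᵥ b) • a
    have hdiff e : u (ie e) - u (je e) =
        ((p (ie e) - p (je e)) ⬝ᵥ a) • b - ((p (ie e) - p (je e)) ⬝ᵥ b) • a := by
      simp only [u, sub_dotProduct, sub_smul]; abel
    refine ⟨u, ?_, ie e, je e, fun h => he ?_⟩
    · ext e
      simp only [rigidityMap_apply, hdiff, sub_dotProduct, smul_dotProduct, dotProduct_comm b,
        dotProduct_comm a, hqa, hqb, smul_eq_mul, Pi.zero_apply]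
      ring
    · have h0 := hdiff e
      rw [h, sub_self, sub_eq_add_neg, ← neg_smul, eq_comm, add_comm] at h0
      exact (LinearIndependent.pair_iff.1 hab _ _ h0).2

end Rotation

section Orthogonal

variable {ι M : Type*} [Fintype ι] [AddCommGroup M]

theorem exists_linearIndependent_pair_orthogonal {N : Submodule ℤ M} [Module.Free ℤ N]
    [Module.Finite ℤ N] (f : M →ₗ[ℤ] ι → ℝ) (hN : finrank ℤ N + 2 ≤ Fintype.card ι) :
    ∃ a b : ι → ℝ, LinearIndependent ℝ ![a, b] ∧ ∀ g ∈ N, f g ⬝ᵥ a = 0 ∧ f g ⬝ᵥ b = 0 := by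
  let B := Module.finBasis ℤ N
  let A : (ι → ℝ) →ₗ[ℝ] Fin (finrank ℤ N) → ℝ := Matrix.mulVecLin (Matrix.of fun i => f (B i))
  have horth (z : ι → ℝ) (hz : z ∈ LinearMap.ker A) (g : M) (hg : g ∈ N) : f g ⬝ᵥ z = 0 := by
    let φ : M →ₗ[ℤ] ℝ :=
      { toFun g := f g ⬝ᵥ z
        map_add' := by simp [add_dotProduct]
        map_smul' m x := by rw [f.map_smul, smul_dotProduct]; rfl }
    have hφ : φ ∘ₗ N.subtype = 0 := B.ext fun i => congrFun hz i
    exact LinearMap.congr_fun hφ ⟨g, hg⟩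
  have hA : 1 < finrank ℝ (LinearMap.ker A) := by
    have hsum := A.finrank_range_add_finrank_ker
    have hrange : finrank ℝ (LinearMap.range A) ≤ finrank ℤ N :=
      (Submodule.finrank_le _).trans_eq (Module.finrank_fin_fun ℝ)
    rw [finrank_fintype_fun_eq_card] at hsum
    omega
  obtain ⟨x, hx⟩ := Module.finrank_pos_iff_exists_ne_zero.1 (zero_lt_one.trans hA)
  obtain ⟨y, hxy⟩ := exists_linearIndependent_pair_of_one_lt_finrank hA hx
  refine ⟨x, y, LinearIndependent.pair_iff.2 fun s t h => LinearIndependent.pair_iff.1 hxy s t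
    (Subtype.ext h), fun g hg => ⟨horth x x.2 g hg, horth y y.2 g hg⟩⟩

end Orthogonal

noncomputable def gainVecLinear {d : ℕ} (L : Matrix (Fin d) (Fin d) ℝ) :
    (Fin d → ℤ) →ₗ[ℤ] Fin d → ℝ :=
  (Matrix.vecMulLinear L).restrictScalars ℤ ∘ₗ (Int.castAddHom ℝ).toIntLinearMap.compLeft (Fin d)

theorem gainVecLinear_apply {d : ℕ} (L : Matrix (Fin d) (Fin d) ℝ) (z : Fin d → ℤ) :
    gainVecLinear L z = gainVec L z := rfl

theorem isMotion_iff_mem_ker {d : ℕ} {V E : Type*} (ie je : E → V) (m : E → Fin d → ℤ)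
    (p : V → Fin d → ℝ) (L : Matrix (Fin d) (Fin d) ℝ) (u : V → Fin d → ℝ) :
    IsMotion d ie je m p L u ↔
      u ∈ LinearMap.ker (rigidityMap ie je fun e => p (ie e) - p (je e) - gainVec L (m e)) :=
  ⟨funext, fun h e => congrFun h e⟩

section Subframework

variable {V E : Type*} {ie je : E → V} {V' : Finset V} {E' : Finset E}
  (hie : ∀ e ∈ E', ie e ∈ V') (hje : ∀ e ∈ E', je e ∈ V')

theorem rigidityMap_restrict_surjective {ι : Type*} [Fintype ι] {q : E → ι → ℝ}
    (hsurj : Function.Surjective (rigidityMap ie je q)) :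
    Function.Surjective (rigidityMap (fun e : E' => (⟨ie e, hie e e.2⟩ : V'))
      (fun e => ⟨je e, hje e e.2⟩) fun e => q e) := by
  classical
  intro y
  obtain ⟨u, hu⟩ := hsurj fun e => if h : e ∈ E' then y ⟨e, h⟩ else 0
  refine ⟨fun v => u v, funext fun e => ?_⟩
  simpa [rigidityMap_apply] using congrFun hu e

theorem exists_nonconstant_motion_of_finrank_gainSpaceOf_add_two_le {d : ℕ}
    (m : E → Fin d → ℤ) (p : V → Fin d → ℝ) (L : Matrix (Fin d) (Fin d) ℝ)
    (hrank : finrank ℤ (gainSpaceOf d ie je m E') + 2 ≤ d) {v₁ v₂ : V'} (hv : v₁ ≠ v₂) :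
    ∃ u ∈ LinearMap.ker (rigidityMap (fun e : E' => (⟨ie e, hie e e.2⟩ : V'))
      (fun e => ⟨je e, hje e e.2⟩) fun e => p (ie e) - p (je e) - gainVec L (m e)),
      ∃ w₁ w₂, u w₁ ≠ u w₂ := by
  obtain ⟨γ, hγ⟩ := exists_potential ie je (E' : Set E) m
  obtain ⟨a, b, hab, horth⟩ := exists_linearIndependent_pair_orthogonal
    (N := gainSpaceOf d ie je m E') (gainVecLinear L) (by rwa [Fintype.card_fin])
  have hshift (e : E') : p (ie e) + gainVec L (γ (ie e)) - (p (je e) + gainVec L (γ (je e))) -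
      (p (ie e) - p (je e) - gainVec L (m e)) = gainVecLinear L (γ (ie e) + m e - γ (je e)) := by
    simp only [map_add, map_sub, gainVecLinear_apply]; abel
  exact exists_nonconstant_mem_ker_rigidityMap _ _ _ (fun v : V' => p v + gainVec L (γ v)) hab
    (fun e => hshift e ▸ horth _ (hγ e e.2)) hv

end Subframework

theorem rigid_implies_subgraph_gainSpace_rank_general (d : ℕ)
    (V E : Type*) [Fintype V] [Fintype E] [DecidableEq V]
    (ie je : E → V) (m : E → Fin d → ℤ)
    (L : Matrix (Fin d) (Fin d) ℝ)
    (hcount : Fintype.card E = d * Fintype.card V - d)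
    (p : V → Fin d → ℝ)
    (hrigid : ∀ u : V → Fin d → ℝ, IsMotion d ie je m p L u → ∀ v w : V, u v = u w) :
    ∀ E' : Finset E, E'.Nonempty →
      E'.card = d * (E'.image ie ∪ E'.image je).card - d →
      d - 1 ≤ Module.finrank ℤ (gainSpaceOf d ie je m (↑E' : Set E)) := by
  intro E' hE' hcard
  by_contra! hrank
  set V' := E'.image ie ∪ E'.image je
  have hie e (he : e ∈ E') : ie e ∈ V' := Finset.mem_union_left _ (Finset.mem_image_of_mem _ he)
  have hje e (he : e ∈ E') : je e ∈ V' := Finset.mem_union_right _ (Finset.mem_image_of_mem _ he)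
  obtain ⟨v₁, hv₁, v₂, hv₂, hv⟩ : ∃ v₁ ∈ V', ∃ v₂ ∈ V', v₁ ≠ v₂ := by
    refine Finset.one_lt_card.1 (lt_of_not_ge fun hV' => hE'.card_pos.ne' ?_)
    rw [hcard, Nat.sub_eq_zero_of_le (mul_le_of_le_one_right d.zero_le hV')]
  obtain ⟨u, hu, w₁, w₂, hw⟩ := exists_nonconstant_motion_of_finrank_gainSpaceOf_add_two_le
    hie hje m p L (by omega) (Subtype.coe_ne_coe.1 hv : (⟨v₁, hv₁⟩ : V') ≠ ⟨v₂, hv₂⟩)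
  have hsurj := rigidityMap_restrict_surjective hie hje <| rigidityMap_surjective ie je _
    (fun u hu => hrigid u ((isMotion_iff_mem_ker ie je m p L u).2 hu)) (by simpa using hcount)
  have hlt := card_lt_finrank_ker_rigidityMap _ _ _ hu hw
  have hsum := card_add_finrank_ker_rigidityMap _ _ _ hsurj
  simp only [Fintype.card_coe, Fintype.card_fin] at hlt hsum
  omega

/-- If `⟨G,m⟩` has `|E| = d|V| - d` and `(⟨G,m⟩,p)` is infinitesimally rigid on the
fixed torus for some configuration `p`, then every nonempty subgraph `E'` with vertex
set `V(E')` (the vertices incident to `E'`) satisfying `|E'| = d|V(E')| - d` has gain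
space of rank at least `d - 1`. -/
theorem rigid_implies_subgraph_gainSpace_rank (d : ℕ) (hd : 1 ≤ d)
    (V E : Type*) [Fintype V] [Fintype E] [DecidableEq V] [DecidableEq E]
    (ie je : E → V) (m : E → Fin d → ℤ)
    (L : Matrix (Fin d) (Fin d) ℝ) (hL : IsUnit L)
    (hcount : Fintype.card E = d * Fintype.card V - d)
    (p : V → Fin d → ℝ)
    (hrigid : ∀ u : V → Fin d → ℝ, IsMotion d ie je m p L u → ∀ v w : V, u v = u w) :
    ∀ E' : Finset E, E'.Nonempty →
      E'.card = d * (E'.image ie ∪ E'.image je).card - d →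
      d - 1 ≤ Module.finrank ℤ (gainSpaceOf d ie je m (↑E' : Set E)) :=
  rigid_implies_subgraph_gainSpace_rank_general d V E ie je m L hcount p hrigid
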